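/- arXiv:2112.03121 — 6 statements merged into one kernel-verified Lean document; each statement's English description precedes it below -/
import Mathlib

section
/- Let (Ω, F, P) be a probability space, (F_t)_{0≤t≤n} a filtration, and A_t ∈ F_t events for 1 ≤ t ≤ n such that the conditional probability P(A_t | F_{t-1}) > 0 almost surely for each t. Then P(A_1 ∩ A_2 ∩ ⋯ ∩ A_n) > 0. -/
open MeasureTheory

/-- Lemma 6.2: if `P(A_t | F_{t-1}) > 0` a.s. for each `1 ≤ t ≤ n`, then
`P(A_1 ∩ ⋯ ∩ A_n) > 0`. -/
theorem stmt1 {Ω : Type*} [m0 : MeasurableSpace Ω] (P : Measure Ω)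
    [IsProbabilityMeasure P] (n : ℕ)
    (F : ℕ → MeasurableSpace Ω) (hle : ∀ t, F t ≤ m0) (hmono : Monotone F)
    (A : ℕ → Set Ω)
    (hA : ∀ t, 1 ≤ t → t ≤ n → MeasurableSet[F t] (A t))
    (hpos : ∀ t, 1 ≤ t → t ≤ n →
      ∀ᵐ ω ∂P, 0 < (P[(A t).indicator (fun _ => (1 : ℝ)) | F (t - 1)]) ω) :
    0 < P (⋂ t ∈ Finset.Icc 1 n, A t) := by
  -- prove by induction on k ≤ n
  suffices h : ∀ k, k ≤ n → 0 < P (⋂ t ∈ Finset.Icc 1 k, A t) from h n le_rfl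
  intro k hk
  induction k with
  | zero => simp
  | succ k ih =>
    have hk' : k ≤ n := Nat.le_of_succ_le hk
    have ihpos := ih hk'
    -- S = ∩_{t=1}^k A t is F k measurable
    set S : Set Ω := ⋂ t ∈ Finset.Icc 1 k, A t with hS
    have hSmeas : MeasurableSet[F k] S := by
      refine Finset.measurableSet_biInter _ ?_
      intro t ht
      rw [Finset.mem_Icc] at ht
      exact hmono ht.2 _ (hA t ht.1 (ht.2.trans hk'))
    have hAmeas : MeasurableSet (A (k + 1)) :=
      hle _ _ (hA (k + 1) (Nat.le_add_left 1 k) hk)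
    have hint : Integrable ((A (k + 1)).indicator (fun _ => (1 : ℝ))) P :=
      (integrable_const (1 : ℝ)).indicator hAmeas
    set g := P[(A (k + 1)).indicator (fun _ => (1 : ℝ)) | F k] with hg
    have hgpos : ∀ᵐ ω ∂P, 0 < g ω := by
      have := hpos (k + 1) (Nat.le_add_left 1 k) hk
      simpa using this
    have hgnn : 0 ≤ᵐ[P.restrict S] g :=
      ae_restrict_of_ae (hgpos.mono fun ω h => h.le)
    have hgint : IntegrableOn g S P := integrable_condExp.integrableOn
    -- the set integral of g over S is positive
    have hsupp : P (Function.support g ∩ S) = P S := by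
      apply le_antisymm (measure_mono Set.inter_subset_right)
      calc P S ≤ P ((Function.support g ∩ S) ∪ {ω | ¬ 0 < g ω}) := by
            apply measure_mono
            intro ω hω
            by_cases h : 0 < g ω
            · exact Or.inl ⟨fun h0 => h.ne' h0, hω⟩
            · exact Or.inr h
        _ ≤ P (Function.support g ∩ S) + P {ω | ¬ 0 < g ω} := measure_union_le _ _
        _ = P (Function.support g ∩ S) := by
            have : P {ω | g ω ≤ 0} = 0 := by
              simpa [ae_iff, not_lt] using hgpos
            simp [this]
    have hintpos : 0 < ∫ ω in S, g ω ∂P := by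
      rw [setIntegral_pos_iff_support_of_nonneg_ae hgnn hgint, hsupp]
      exact ihpos
    have heq : ∫ ω in S, g ω ∂P = (P (A (k + 1) ∩ S)).toReal := by
      rw [hg, setIntegral_condExp (hle k) hint hSmeas]
      rw [setIntegral_indicator hAmeas]
      simp [Measure.restrict_apply hAmeas, Set.inter_comm, measureReal_def]
    have hfinal : 0 < P (A (k + 1) ∩ S) := by
      rw [heq] at hintpos
      exact ENNReal.toReal_pos_iff.mp hintpos |>.1
    have hicc : (⋂ t ∈ Finset.Icc 1 (k + 1), A t) = A (k + 1) ∩ S := by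
      rw [hS]
      have : Finset.Icc 1 (k + 1) = insert (k + 1) (Finset.Icc 1 k) := by
        rw [← Finset.Ico_insert_right (by omega : 1 ≤ k + 1), Finset.Ico_add_one_right_eq_Icc]
      rw [this]
      simp [Set.biInter_insert]
    rw [hicc]
    exact hfinal
end

section
/- Let (u_t)_{t∈ℤ} be a sequence of real numbers, C ≥ 0, p a positive integer, (a_i)_{i≥1} nonnegative reals with a := ∑_{i=1}^∞ a_i < 1, and (v_t)_{t≥0} a nonnegative non-increasing sequence. Assume u_t ≤ C for t ≤ 0 and u_t ≤ ∑_{i=1}^p a_i u_{t-i} + v_t for t > 0. Then for all t, u_t ≤ C · a^{(t∨0)/p} + ∑_{j≥0} a^{j/p} v_{(t-j)∨0}. -/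
/-- Lemma 6.3: deterministic recursive bound.  If `u t ≤ C` for `t ≤ 0` and
`u t ≤ ∑_{i=1}^p a_i u_{t-i} + v_t` for `t > 0`, with `a := ∑_{i≥1} a_i < 1`
and `v` nonnegative nonincreasing, then
`u t ≤ C a^{(t∨0)/p} + ∑_{j≥0} a^{j/p} v_{(t-j)∨0}`. -/
theorem stmt2 (u : ℤ → ℝ) (C : ℝ) (p : ℕ) (a : ℕ → ℝ) (v : ℕ → ℝ)
    (hC : 0 ≤ C) (hp : 1 ≤ p)
    (ha0 : ∀ i, 0 ≤ a i) (hsum : Summable fun i => a (i + 1))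
    (hA : (∑' i : ℕ, a (i + 1)) < 1)
    (hv0 : ∀ t, 0 ≤ v t) (hvmono : ∀ s t : ℕ, s ≤ t → v t ≤ v s)
    (hneg : ∀ t : ℤ, t ≤ 0 → u t ≤ C)
    (hrec : ∀ t : ℤ, 0 < t →
      u t ≤ (∑ i ∈ Finset.Icc 1 p, a i * u (t - (i : ℤ))) + v t.toNat) :
    ∀ t : ℤ, u t ≤ C * (∑' i : ℕ, a (i + 1)) ^ ((t.toNat : ℝ) / p) +
      ∑' j : ℕ, (∑' i : ℕ, a (i + 1)) ^ ((j : ℝ) / p) * v (t - (j : ℤ)).toNat := by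
  set A : ℝ := ∑' i : ℕ, a (i + 1) with hAdef
  have hp0 : (0:ℝ) < p := by exact_mod_cast Nat.pos_of_ne_zero (by omega)
  have hA0 : 0 ≤ A := tsum_nonneg fun i => ha0 _
  have hq0 : 0 ≤ A ^ ((1:ℝ)/p) := Real.rpow_nonneg hA0 _
  have hq1 : A ^ ((1:ℝ)/p) < 1 := Real.rpow_lt_one hA0 hA (by positivity)
  have hpow : ∀ j : ℕ, A ^ ((j:ℝ)/p) = (A ^ ((1:ℝ)/p))^j := fun j => by
    rw [← Real.rpow_natCast (A ^ ((1:ℝ)/p)) j, ← Real.rpow_mul hA0]; ring_nf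
  have hterm0 : ∀ (s : ℤ) (j : ℕ), 0 ≤ A ^ ((j:ℝ)/p) * v (s - (j:ℤ)).toNat :=
    fun s j => mul_nonneg (Real.rpow_nonneg hA0 _) (hv0 _)
  have hSummW : ∀ s : ℤ, Summable (fun j : ℕ => A ^ ((j:ℝ)/p) * v (s - (j:ℤ)).toNat) := by
    intro s
    apply Summable.of_nonneg_of_le (fun j => hterm0 s j) (fun j => ?_)
      ((summable_geometric_of_lt_one hq0 hq1).mul_right (v 0))
    rw [hpow]
    exact mul_le_mul_of_nonneg_left (hvmono 0 _ (Nat.zero_le _)) (by positivity)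
  have hS0 : ∀ s : ℤ, 0 ≤ ∑' j : ℕ, A ^ ((j:ℝ)/p) * v (s - (j:ℤ)).toNat :=
    fun s => tsum_nonneg (hterm0 s)
  have hbase : ∀ s : ℤ, s ≤ 0 →
      u s ≤ C * A ^ ((s.toNat : ℝ)/p) + ∑' j : ℕ, A ^ ((j:ℝ)/p) * v (s - (j:ℤ)).toNat := by
    intro s hs
    have h1 : s.toNat = 0 := Int.toNat_of_nonpos hs
    rw [h1]
    simp only [Nat.cast_zero, zero_div, Real.rpow_zero, mul_one]
    have := hS0 s
    have := hneg s hs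
    linarith
  have key : ∀ n : ℕ, ∀ s : ℤ, s.toNat ≤ n →
      u s ≤ C * A ^ ((s.toNat : ℝ)/p) + ∑' j : ℕ, A ^ ((j:ℝ)/p) * v (s - (j:ℤ)).toNat := by
    intro n
    induction n with
    | zero => exact fun s hs => hbase s (by omega)
    | succ n ih =>
      intro s hs
      rcases le_or_gt s 0 with hs0 | hs0
      · exact hbase s hs0
      rcases hA0.eq_or_lt with hA' | hApos
      · -- A = 0 : all coefficients vanish
        have haz : ∀ i ∈ Finset.Icc 1 p, a i * u (s - (i:ℤ)) = 0 := by
          intro i hi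
          rw [Finset.mem_Icc] at hi
          obtain ⟨k, rfl⟩ : ∃ k, i = k + 1 := ⟨i - 1, by omega⟩
          have h1 : a (k+1) ≤ A := Summable.le_tsum hsum k fun j _ => ha0 _
          have h2 := ha0 (k+1)
          have : a (k+1) = 0 := le_antisymm (by linarith [hA'.symm ▸ h1]) h2
          rw [this, zero_mul]
        have hle : u s ≤ v s.toNat := by
          have := hrec s hs0
          rwa [Finset.sum_eq_zero haz, zero_add] at this
        have hterm : v s.toNat ≤ ∑' j : ℕ, A ^ ((j:ℝ)/p) * v (s - (j:ℤ)).toNat := by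
          have := Summable.le_tsum (hSummW s) 0 fun j _ => hterm0 s j
          simpa using this
        have : 0 ≤ C * A ^ ((s.toNat : ℝ)/p) :=
          mul_nonneg hC (Real.rpow_nonneg hA0 _)
        linarith
      · -- A > 0 : main inductive step
        have haP : ∑ i ∈ Finset.Icc 1 p, a i ≤ A := by
          have he : ∑ i ∈ Finset.Icc 1 p, a i = ∑ k ∈ Finset.range p, a (k+1) := by
            have himg : Finset.Icc 1 p = Finset.image (· + 1) (Finset.range p) := by
              ext x
              simp only [Finset.mem_Icc, Finset.mem_image, Finset.mem_range]
              constructor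
              · rintro ⟨h1, h2⟩
                exact ⟨x - 1, by omega, by omega⟩
              · rintro ⟨k, hk, rfl⟩
                omega
            rw [himg, Finset.sum_image fun x _ y _ h => by omega]
          rw [he]
          exact Summable.sum_le_tsum _ (fun k _ => ha0 _) hsum
        -- Part 1 : geometric part
        have h1 : ∑ i ∈ Finset.Icc 1 p, a i * (C * A ^ (((s - (i:ℤ)).toNat : ℝ)/p))
            ≤ C * A ^ ((s.toNat : ℝ)/p) := by
          have hK0 : 0 ≤ C * A ^ ((s.toNat : ℝ)/p - 1) :=
            mul_nonneg hC (Real.rpow_nonneg hA0 _)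
          have step : ∀ i ∈ Finset.Icc 1 p,
              a i * (C * A ^ (((s - (i:ℤ)).toNat : ℝ)/p))
                ≤ a i * (C * A ^ ((s.toNat : ℝ)/p - 1)) := by
            intro i hi
            rw [Finset.mem_Icc] at hi
            have hnat : s.toNat ≤ (s - (i:ℤ)).toNat + p := by omega
            have hexp : (s.toNat : ℝ)/p - 1 ≤ ((s - (i:ℤ)).toNat : ℝ)/p := by
              have hcast : (s.toNat : ℝ) ≤ ((s - (i:ℤ)).toNat : ℝ) + p := by
                exact_mod_cast hnat
              have he : (s.toNat : ℝ)/p - 1 = ((s.toNat : ℝ) - p)/p := by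
                field_simp
              rw [he]
              gcongr
              linarith
            exact mul_le_mul_of_nonneg_left
              (mul_le_mul_of_nonneg_left
                (Real.rpow_le_rpow_of_exponent_ge hApos hA.le hexp) hC) (ha0 i)
          calc ∑ i ∈ Finset.Icc 1 p, a i * (C * A ^ (((s - (i:ℤ)).toNat : ℝ)/p))
              ≤ ∑ i ∈ Finset.Icc 1 p, a i * (C * A ^ ((s.toNat : ℝ)/p - 1)) :=
                Finset.sum_le_sum step
            _ = (∑ i ∈ Finset.Icc 1 p, a i) * (C * A ^ ((s.toNat : ℝ)/p - 1)) :=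
                (Finset.sum_mul _ _ _).symm
            _ ≤ A * (C * A ^ ((s.toNat : ℝ)/p - 1)) :=
                mul_le_mul_of_nonneg_right haP hK0
            _ = C * A ^ ((s.toNat : ℝ)/p) := by
                rw [show (s.toNat : ℝ)/p = 1 + ((s.toNat : ℝ)/p - 1) by ring,
                  Real.rpow_add hApos, Real.rpow_one]
                ring
        -- Part 2 : the v part
        set T : ℝ := ∑' k : ℕ, A ^ (((k:ℝ)+1)/p) * v (s - ((k:ℤ)+1)).toNat with hT
        have hTsum : Summable (fun k : ℕ => A ^ (((k:ℝ)+1)/p) * v (s - ((k:ℤ)+1)).toNat) := by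
          have := (summable_nat_add_iff 1).mpr (hSummW s)
          apply this.congr
          intro k
          push_cast
          ring_nf
        have hT0 : 0 ≤ T :=
          tsum_nonneg fun k => mul_nonneg (Real.rpow_nonneg hA0 _) (hv0 _)
        have hsplit : (∑' j : ℕ, A ^ ((j:ℝ)/p) * v (s - (j:ℤ)).toNat) = v s.toNat + T := by
          rw [Summable.tsum_eq_zero_add (hSummW s)]
          simp [hT]
        have h2 : ∑ i ∈ Finset.Icc 1 p,
            a i * ∑' j : ℕ, A ^ ((j:ℝ)/p) * v ((s - (i:ℤ)) - (j:ℤ)).toNat ≤ T := by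
          have hstep : ∀ i ∈ Finset.Icc 1 p,
              (∑' j : ℕ, A ^ ((j:ℝ)/p) * v ((s - (i:ℤ)) - (j:ℤ)).toNat) ≤ A⁻¹ * T := by
            intro i hi
            rw [Finset.mem_Icc] at hi
            have hinj : Function.Injective (fun j : ℕ => j + (i - 1)) :=
              add_left_injective _
            have hcomp : (∑' j : ℕ, A ^ ((j:ℝ)/p) * v ((s - (i:ℤ)) - (j:ℤ)).toNat)
                ≤ ∑' k : ℕ, A⁻¹ * (A ^ (((k:ℝ)+1)/p) * v (s - ((k:ℤ)+1)).toNat) := by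
              apply Summable.tsum_le_tsum_of_inj (fun j : ℕ => j + (i - 1)) hinj
                (fun c _ => mul_nonneg (inv_nonneg.mpr hA0)
                  (mul_nonneg (Real.rpow_nonneg hA0 _) (hv0 _)))
                ?_ (hSummW (s - (i:ℤ))) (hTsum.mul_left _)
              intro j
              have hidx1 : ((↑(j + (i-1)) : ℝ) + 1) = ((j + i : ℕ) : ℝ) := by
                push_cast [hi.1]
                ring
              have hidx2 : ((↑(j + (i-1)) : ℤ) + 1) = ((j + i : ℕ) : ℤ) := by
                push_cast [hi.1]
                ring
              rw [hidx1, hidx2]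
              have hv' : ((s - (i:ℤ)) - (j:ℤ)) = s - ((j + i : ℕ) : ℤ) := by
                push_cast; ring
              rw [hv']
              have hle : A ^ ((j:ℝ)/p) ≤ A ^ (((j + i : ℕ) : ℝ)/p - 1) := by
                apply Real.rpow_le_rpow_of_exponent_ge hApos hA.le
                have hip : (i : ℝ) ≤ p := by exact_mod_cast hi.2
                have he : (((j + i : ℕ) : ℝ))/p - 1 = (((j + i : ℕ) : ℝ) - p)/p := by
                  field_simp
                rw [he]
                push_cast
                gcongr
                linarith
              calc A ^ ((j:ℝ)/p) * v (s - ((j + i : ℕ) : ℤ)).toNat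
                  ≤ A ^ (((j + i : ℕ) : ℝ)/p - 1) * v (s - ((j + i : ℕ) : ℤ)).toNat :=
                    mul_le_mul_of_nonneg_right hle (hv0 _)
                _ = A⁻¹ * (A ^ (((j + i : ℕ) : ℝ)/p) * v (s - ((j + i : ℕ) : ℤ)).toNat) := by
                    rw [Real.rpow_sub hApos, Real.rpow_one]
                    ring
            calc (∑' j : ℕ, A ^ ((j:ℝ)/p) * v ((s - (i:ℤ)) - (j:ℤ)).toNat)
                ≤ ∑' k : ℕ, A⁻¹ * (A ^ (((k:ℝ)+1)/p) * v (s - ((k:ℤ)+1)).toNat) :=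
                  hcomp
              _ = A⁻¹ * T := tsum_mul_left
          have hiT : 0 ≤ A⁻¹ * T := mul_nonneg (inv_nonneg.mpr hA0) hT0
          calc ∑ i ∈ Finset.Icc 1 p,
              a i * ∑' j : ℕ, A ^ ((j:ℝ)/p) * v ((s - (i:ℤ)) - (j:ℤ)).toNat
              ≤ ∑ i ∈ Finset.Icc 1 p, a i * (A⁻¹ * T) :=
                Finset.sum_le_sum fun i hi =>
                  mul_le_mul_of_nonneg_left (hstep i hi) (ha0 i)
            _ = (∑ i ∈ Finset.Icc 1 p, a i) * (A⁻¹ * T) := (Finset.sum_mul _ _ _).symm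
            _ ≤ A * (A⁻¹ * T) := mul_le_mul_of_nonneg_right haP hiT
            _ = T := by
                rw [← mul_assoc, mul_inv_cancel₀ hApos.ne', one_mul]
        -- assemble
        have hbound : ∀ i ∈ Finset.Icc 1 p,
            a i * u (s - (i:ℤ)) ≤ a i * (C * A ^ (((s - (i:ℤ)).toNat : ℝ)/p)
              + ∑' j : ℕ, A ^ ((j:ℝ)/p) * v ((s - (i:ℤ)) - (j:ℤ)).toNat) := by
          intro i hi
          rw [Finset.mem_Icc] at hi
          exact mul_le_mul_of_nonneg_left (ih (s - (i:ℤ)) (by omega)) (ha0 i)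
        calc u s ≤ (∑ i ∈ Finset.Icc 1 p, a i * u (s - (i:ℤ))) + v s.toNat := hrec s hs0
          _ ≤ (∑ i ∈ Finset.Icc 1 p, a i * (C * A ^ (((s - (i:ℤ)).toNat : ℝ)/p)
                + ∑' j : ℕ, A ^ ((j:ℝ)/p) * v ((s - (i:ℤ)) - (j:ℤ)).toNat)) + v s.toNat :=
              add_le_add_left (Finset.sum_le_sum hbound) _
          _ = (∑ i ∈ Finset.Icc 1 p, a i * (C * A ^ (((s - (i:ℤ)).toNat : ℝ)/p)))
              + (∑ i ∈ Finset.Icc 1 p,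
                  a i * ∑' j : ℕ, A ^ ((j:ℝ)/p) * v ((s - (i:ℤ)) - (j:ℤ)).toNat)
              + v s.toNat := by
              rw [← Finset.sum_add_distrib]
              simp [mul_add]
          _ ≤ C * A ^ ((s.toNat : ℝ)/p) + T + v s.toNat :=
              add_le_add (add_le_add h1 h2) le_rfl
          _ = C * A ^ ((s.toNat : ℝ)/p)
              + ∑' j : ℕ, A ^ ((j:ℝ)/p) * v (s - (j:ℤ)).toNat := by
              rw [hsplit]; ring
  intro t
  exact key t.toNat t le_rfl
end

section
/- Let E be a nonempty finite set, (Ω, F, P) a probability space, and (F_n)_{n≥1} a stationary ergodic sequence of random maps F_n : E → E (i.e., (F_n) is a measurable stationary ergodic process with values in the finite set of functions E → E). Write F_s^t = F_t ∘ F_{t-1} ∘ ⋯ ∘ F_s for s ≤ t, and suppose there is a positive integer m with P(#F_1^m(E) = 1) > 0. Then almost surely, for every t, there exists a random integer T ≥ 1 such that F_{t-T-m+1}^{t-T} is a constant map, and consequently for every y, y' ∈ E the iterates F_{t-n}^t(y) and F_{t-n}^t(y') coincide and are eventually constant in n: the limit Y_t := lim_{n→∞} F_{t-n}^t(y) exists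 a.s. and does not depend on y. -/
open MeasureTheory

/-- Composition of the maps `F s, F (s+1), …, F (s+n)` (a block of `n+1` maps):
`compMaps F s n = F (s+n) ∘ ⋯ ∘ F s`. -/
def compMaps {E : Type*} (F : ℤ → E → E) (s : ℤ) : ℕ → E → E
  | 0 => F s
  | n + 1 => F (s + n + 1) ∘ compMaps F s n

lemma compMaps_shift {E : Type*} (G : ℤ → E → E) (s : ℤ) (n : ℕ) :
    compMaps (fun k => G (k + 1)) s n = compMaps G (s + 1) n := by
  induction n with
  | zero => rfl
  | succ n ih =>
    show G (s + ↑n + 1 + 1) ∘ _ = G (s + 1 + ↑n + 1) ∘ _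
    rw [ih]; ring_nf

lemma compMaps_split {E : Type*} (G : ℤ → E → E) (s : ℤ) (p : ℕ) :
    ∀ (q : ℕ) (y : E), compMaps G s (p + q + 1) y
      = compMaps G (s + p + 1) q (compMaps G s p y) := by
  intro q
  induction q with
  | zero => intro y; rfl
  | succ q ih =>
    intro y
    show G (s + ↑(p + q + 1) + 1) (compMaps G s (p + q + 1) y)
      = G (s + ↑p + 1 + ↑q + 1) (compMaps G (s + ↑p + 1) q (compMaps G s p y))
    rw [ih]
    congr 1
    push_cast
    ring

lemma measurable_compMaps {Ω E : Type*} [MeasurableSpace Ω]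
    [Fintype E] [MeasurableSpace E] [MeasurableSingletonClass E]
    (F : ℤ → Ω → E → E) (hmeas : ∀ (n : ℤ) (y : E), Measurable fun ω => F n ω y)
    (s : ℤ) (n : ℕ) (y : E) :
    Measurable fun ω => compMaps (fun k => F k ω) s n y := by
  induction n with
  | zero => exact hmeas s y
  | succ n ih =>
    show Measurable fun ω => F (s + n + 1) ω (compMaps (fun k => F k ω) s n y)
    apply measurable_to_countable'
    intro c
    have : (fun ω => F (s + n + 1) ω (compMaps (fun k => F k ω) s n y)) ⁻¹' {c}
        = ⋃ e : E, {ω | compMaps (fun k => F k ω) s n y = e} ∩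
            {ω | F (s + n + 1) ω e = c} := by
      ext ω
      simp only [Set.mem_preimage, Set.mem_singleton_iff, Set.mem_iUnion, Set.mem_inter_iff,
        Set.mem_setOf_eq]
      constructor
      · intro h; exact ⟨_, rfl, h⟩
      · rintro ⟨e, he, h⟩; rw [he]; exact h
    rw [this]
    exact MeasurableSet.iUnion fun e =>
      ((ih.comp measurable_id) (measurableSet_singleton e)).inter
        ((hmeas (s + n + 1) e) (measurableSet_singleton c))

/-- Coalescence argument of Theorem 4.1. -/
theorem stmt5 {Ω E : Type*} [MeasurableSpace Ω] (P : Measure Ω) [IsProbabilityMeasure P]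
    [Fintype E] [Nonempty E] [MeasurableSpace E] [MeasurableSingletonClass E]
    (T : Ω ≃ Ω) (hT : Ergodic (T : Ω → Ω) P)
    (F0 : Ω → E → E) (F : ℤ → Ω → E → E)
    (hstat : ∀ (n : ℤ) (ω : Ω), F n ω = F0 ((T ^ n) ω))
    (hmeas : ∀ (n : ℤ) (y : E), Measurable fun ω => F n ω y)
    (m : ℕ) (hm : 1 ≤ m)
    (hB1 : 0 < P {ω | ∃ c : E, ∀ y : E, compMaps (fun k => F k ω) 1 (m - 1) y = c}) :
    ∀ᵐ ω ∂P, ∀ t : ℤ,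
      (∃ Tr : ℕ, 1 ≤ Tr ∧
        ∃ c : E, ∀ y : E, compMaps (fun k => F k ω) (t - Tr - m + 1) (m - 1) y = c) ∧
      ∃ c : E, ∃ N : ℕ, ∀ n : ℕ, N ≤ n → ∀ y : E,
        compMaps (fun k => F k ω) (t - n) n y = c := by
  classical
  -- the window-constancy events
  set S : ℤ → Set Ω := fun s =>
    {ω | ∃ c : E, ∀ y : E, compMaps (fun k => F k ω) s (m - 1) y = c} with hS
  have hSmeas : ∀ s, MeasurableSet (S s) := by
    intro s
    have : S s = ⋃ c : E, ⋂ y : E,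
        {ω | compMaps (fun k => F k ω) s (m - 1) y = c} := by
      ext ω; simp [hS, Set.mem_iUnion, Set.mem_iInter]
    rw [this]
    exact MeasurableSet.iUnion fun c => MeasurableSet.iInter fun y =>
      (measurable_compMaps F hmeas s (m - 1) y) (measurableSet_singleton c)
  -- shift relation: T ⁻¹' (S s) = S (s + 1)
  have hFshift : ∀ (k : ℤ) (ω : Ω), F k (T ω) = F (k + 1) ω := by
    intro k ω
    rw [hstat k (T ω), hstat (k + 1) ω]
    have : (T ^ k) (T ω) = ((T ^ k) * (T ^ (1 : ℤ))) ω := by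
      simp [Equiv.Perm.mul_apply, zpow_one]
    rw [this, ← zpow_add]
  have hSshift : ∀ s, (T : Ω → Ω) ⁻¹' (S s) = S (s + 1) := by
    intro s
    ext ω
    simp only [Set.mem_preimage, hS, Set.mem_setOf_eq]
    have : (fun k => F k (T ω)) = fun k => F (k + 1) ω := by
      funext k; exact hFshift k ω
    rw [this, compMaps_shift (fun k => F k ω) s (m - 1)]
  -- all S s have the same (positive) measure
  have hmeq : ∀ s : ℤ, P (S s) = P (S 1) := by
    have key : ∀ s : ℤ, P (S (s + 1)) = P (S s) := by
      intro s
      rw [← hSshift s]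
      exact hT.toMeasurePreserving.measure_preimage (hSmeas s).nullMeasurableSet
    have h0 : ∀ s : ℤ, P (S s) = P (S 0) := by
      intro s
      induction s using Int.induction_on with
      | zero => rfl
      | succ k ih => rw [key k, ih]
      | pred k ih => rw [← ih, ← key (-k - 1)]; norm_num
    intro s; rw [h0 s, ← h0 1]
  have hpos : ∀ s : ℤ, 0 < P (S s) := by
    intro s; rw [hmeq s]; exact hB1
  -- the union over past windows
  set U : ℤ → Set Ω := fun t => ⋃ j : ℕ, S (t - m - j) with hU
  have hUmeas : ∀ t, MeasurableSet (U t) := fun t =>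
    MeasurableSet.iUnion fun j => hSmeas _
  have hUfull : ∀ t : ℤ, ∀ᵐ ω ∂P, ω ∈ U t := by
    intro t
    have hsub : U t ⊆ (T : Ω → Ω) ⁻¹' (U t) := by
      intro ω hω
      obtain ⟨j, hj⟩ := Set.mem_iUnion.mp hω
      rw [Set.mem_preimage]
      apply Set.mem_iUnion.mpr
      refine ⟨j + 1, ?_⟩
      have h1 : T ω ∈ S (t - ↑m - ↑(j + 1)) ↔ ω ∈ S (t - ↑m - ↑(j + 1) + 1) := by
        rw [← hSshift]; rfl
      rw [h1]
      have : t - ↑m - ↑(j + 1) + 1 = t - ↑m - ↑j := by push_cast; ring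
      rwa [this]
    have := hT.ae_empty_or_univ_of_ae_le_preimage (hUmeas t).nullMeasurableSet
      (HasSubset.Subset.eventuallyLE hsub)
    rcases this with h | h
    · exfalso
      have h1 : P (U t) = 0 := by
        calc P (U t) = P (∅ : Set Ω) := measure_congr h
        _ = 0 := measure_empty
      have h2 : 0 < P (U t) :=
        lt_of_lt_of_le (hpos (t - m)) (measure_mono (by
          intro ω hω
          simp only [hU, Set.mem_iUnion]
          exact ⟨0, by simpa using hω⟩))
      exact h2.ne' (h1 ▸ rfl)
    · have h1 : P (U t) = 1 := by
        calc P (U t) = P (Set.univ : Set Ω) := measure_congr h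
        _ = 1 := measure_univ
      rw [ae_iff]
      have : {ω | ¬ ω ∈ U t} = (U t)ᶜ := rfl
      rw [this, measure_compl (hUmeas t) (measure_ne_top P _), h1, measure_univ]
      simp
  have hall : ∀ᵐ ω ∂P, ∀ t : ℤ, ω ∈ U t := by
    rw [ae_all_iff]; exact hUfull
  -- deterministic part
  filter_upwards [hall] with ω hω t
  obtain ⟨j, hj⟩ := Set.mem_iUnion.mp (hω t)
  obtain ⟨c0, hc0⟩ := hj
  set G : ℤ → E → E := fun k => F k ω with hG
  obtain ⟨p, hp⟩ : ∃ p, m = p + 1 := ⟨m - 1, by omega⟩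
  have hm1 : m - 1 = p := by omega
  -- s0 = t - m - j; window is [s0, s0 + m - 1]
  constructor
  · refine ⟨j + 1, by omega, c0, ?_⟩
    have : t - ↑(j + 1) - ↑m + 1 = t - ↑m - ↑j := by push_cast; ring
    rw [this]; exact hc0
  · -- let N = p + j + 1; note t - N = t - m - j + ... check
    set N : ℕ := p + j + 1 with hN
    have hs0 : t - ↑m - ↑j = t - ↑N := by
      rw [hN, hp]; push_cast; ring
    set c : E := compMaps G (t - ↑N + ↑p + 1) j c0 with hc
    have key : ∀ z : E, compMaps G (t - ↑N) N z = c := by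
      intro z
      rw [hN]
      rw [compMaps_split G (t - ↑N) p j z]
      have : compMaps G (t - ↑N) p z = c0 := by
        have := hc0 z
        rw [hm1] at this
        rwa [hs0] at this
      rw [this, hc, hN]
    refine ⟨c, N, ?_⟩
    intro n hn y
    obtain ⟨e, he⟩ : ∃ e, n = N + e := ⟨n - N, by omega⟩
    cases e with
    | zero =>
      have : n = N := by omega
      subst this
      exact key y
    | succ e =>
      have hn' : n = e + N + 1 := by omega
      subst hn'
      rw [compMaps_split G (t - ↑(e + N + 1)) e N y]
      have harg : t - ↑(e + N + 1) + ↑e + 1 = t - ↑N := by push_cast; ring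
      rw [harg]
      exact key _
end

section
/- Let (u_t)_{t∈ℤ} be a sequence of nonnegative reals, C ≥ 0, p ≥ 1 an integer, (a_i)_{i≥1} nonnegative with a := ∑_{i≥1} a_i < 1, and (S_k) defined by S_k = ∑_{j≥k} a_j. Suppose u_t = 0 for t ≤ -N' for some N' > N ≥ 1, u_t ≤ C for -N' < t ≤ -N, and u_t ≤ ∑_{i=1}^p a_i u_{t-i} + C·S_{p+1} for t > -N. Then for all t, u_t ≤ C·( a^{max(0, t+N)/p} + S_{p+1}/(1-a) ). -/
/-!
Bound `u` by the envelope `B t = C (a^{m(t)/p} + S_{p+1}/(1-a))` with `m(t) = max(0, t + N)`.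
The envelope dominates `u` up to time `-N`, it is antitone, and it absorbs one step of the
recursion: `a · B(t - p) + C S_{p+1} ≤ B t`, because `m` grows by at most `p` over `p` steps
and `a · S_{p+1}/(1-a) + S_{p+1} = S_{p+1}/(1-a)`. Induction on `t` does the rest.
-/

open Finset

theorem le_of_le_sum_lag_add {u B : ℤ → ℝ} {a : ℕ → ℝ} {p : ℕ} {t₀ : ℤ} {A c : ℝ}
    (ha : ∀ i, 0 ≤ a i) (haA : ∑ i ∈ Icc 1 p, a i ≤ A) (hB : Antitone B) (hB0 : ∀ t, 0 ≤ B t)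
    (hinit : ∀ t ≤ t₀, u t ≤ B t)
    (hrec : ∀ t > t₀, u t ≤ ∑ i ∈ Icc 1 p, a i * u (t - i) + c)
    (hstep : ∀ t > t₀, A * B (t - p) + c ≤ B t) (t : ℤ) : u t ≤ B t := by
  suffices h : ∀ n : ℕ, ∀ t ≤ t₀ + n, u t ≤ B t from h (t - t₀).toNat t (by omega)
  intro n
  induction n with
  | zero => simpa using hinit
  | succ n ih =>
    intro t ht
    rcases le_or_gt t (t₀ + n) with hle | hgt
    · exact ih t hle
    have hlag : ∀ i ∈ Icc 1 p, a i * u (t - i) ≤ a i * B (t - p) := fun i hi => by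
      have := mem_Icc.mp hi
      exact mul_le_mul_of_nonneg_left ((ih _ (by omega)).trans (hB (by omega))) (ha i)
    calc u t ≤ ∑ i ∈ Icc 1 p, a i * u (t - i) + c := hrec t (by omega)
      _ ≤ (∑ i ∈ Icc 1 p, a i) * B (t - p) + c := by
        rw [sum_mul]; exact add_le_add_left (sum_le_sum hlag) c
      _ ≤ A * B (t - p) + c := by gcongr; exact hB0 _
      _ ≤ B t := hstep t (by omega)

theorem mul_rpow_le_rpow_of_le_add_one {A x y : ℝ} (hA0 : 0 ≤ A) (hA1 : A ≤ 1) (hx : 0 ≤ x)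
    (hy : 0 ≤ y) (hyx : y ≤ x + 1) : A * A ^ x ≤ A ^ y := by
  calc A * A ^ x = A ^ (x + 1) := by rw [Real.rpow_add' hA0 (by linarith), Real.rpow_one, mul_comm]
    _ ≤ A ^ y := Real.rpow_le_rpow_of_exponent_ge' hA0 hA1 hy hyx

theorem sum_Icc_le_tsum_succ {a : ℕ → ℝ} (ha : ∀ i, 0 ≤ a i)
    (hsum : Summable fun i : ℕ => a (i + 1)) (p : ℕ) :
    ∑ i ∈ Icc 1 p, a i ≤ ∑' i : ℕ, a (i + 1) := by
  rw [← Ico_add_one_right_eq_Icc, sum_Ico_eq_sum_range, Nat.add_sub_cancel]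
  simp_rw [add_comm 1]
  exact hsum.sum_le_tsum _ fun i _ => ha _

noncomputable def cauchyEnvelope (C A S : ℝ) (p N : ℕ) (t : ℤ) : ℝ :=
  C * (A ^ ((((t + N) ⊔ 0).toNat : ℝ) / p) + S / (1 - A))

namespace cauchyEnvelope

variable {C A S : ℝ} {p N : ℕ}

theorem nonneg (hC : 0 ≤ C) (hA0 : 0 ≤ A) (hA1 : A < 1) (hS : 0 ≤ S) (t : ℤ) :
    0 ≤ cauchyEnvelope C A S p N t :=
  mul_nonneg hC (add_nonneg (Real.rpow_nonneg hA0 _) (div_nonneg hS (by linarith)))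

theorem antitone (hC : 0 ≤ C) (hA0 : 0 ≤ A) (hA1 : A ≤ 1) :
    Antitone (cauchyEnvelope C A S p N) := fun s t hst => by
  have hm : ((s + N) ⊔ 0).toNat ≤ ((t + N) ⊔ 0).toNat := by omega
  have hexp : (((s + N) ⊔ 0).toNat : ℝ) / p ≤ (((t + N) ⊔ 0).toNat : ℝ) / p := by gcongr
  exact mul_le_mul_of_nonneg_left (add_le_add_left
    (Real.rpow_le_rpow_of_exponent_ge' hA0 hA1 (by positivity) hexp) _) hC

theorem const_le_of_le_neg (hC : 0 ≤ C) (hA1 : A < 1) (hS : 0 ≤ S) {t : ℤ} (ht : t ≤ -(N : ℤ)) :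
    C ≤ cauchyEnvelope C A S p N t := by
  have hm : ((t + N) ⊔ 0).toNat = 0 := by omega
  have : 0 ≤ S / (1 - A) := div_nonneg hS (by linarith)
  rw [cauchyEnvelope, hm, Nat.cast_zero, zero_div, Real.rpow_zero]
  nlinarith

theorem mul_lag_add_le (hC : 0 ≤ C) (hA0 : 0 ≤ A) (hA1 : A < 1) (t : ℤ) :
    A * cauchyEnvelope C A S p N (t - p) + C * S ≤ cauchyEnvelope C A S p N t := by
  have hexp : (((t + N) ⊔ 0).toNat : ℝ) / p ≤ (((t - p + N) ⊔ 0).toNat : ℝ) / p + 1 := by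
    have hm : (((t + N) ⊔ 0).toNat : ℝ) ≤ ((t - p + N) ⊔ 0).toNat + p := by
      exact_mod_cast (by omega)
    calc (((t + N) ⊔ 0).toNat : ℝ) / p ≤ (((t - p + N) ⊔ 0).toNat + p : ℝ) / p := by gcongr
      _ ≤ (((t - p + N) ⊔ 0).toNat : ℝ) / p + 1 := by rw [add_div]; gcongr; exact div_self_le_one _
  have hpow := mul_rpow_le_rpow_of_le_add_one hA0 hA1.le (by positivity) (by positivity) hexp
  have hgeom : A * (S / (1 - A)) + S = S / (1 - A) := by
    field_simp [(by linarith : (1 - A) ≠ 0)]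
    ring
  unfold cauchyEnvelope
  nlinarith

end cauchyEnvelope

theorem stmt8_general (u : ℤ → ℝ) (C : ℝ) (p : ℕ) (a : ℕ → ℝ) (N N' : ℕ)
    (hC : 0 ≤ C) (ha : ∀ i, 0 ≤ a i)
    (hsum : Summable fun i : ℕ => a (i + 1))
    (hA : (∑' i : ℕ, a (i + 1)) < 1)
    (h1 : ∀ t : ℤ, t ≤ -(N' : ℤ) → u t = 0)
    (h2 : ∀ t : ℤ, -(N' : ℤ) < t → t ≤ -(N : ℤ) → u t ≤ C)
    (hrec : ∀ t : ℤ, -(N : ℤ) < t →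
      u t ≤ (∑ i ∈ Finset.Icc 1 p, a i * u (t - (i : ℤ))) +
        C * ∑' j : ℕ, a (p + 1 + j)) :
    ∀ t : ℤ, u t ≤ C * ((∑' i : ℕ, a (i + 1)) ^ ((((t + N) ⊔ 0).toNat : ℝ) / p) +
      (∑' j : ℕ, a (p + 1 + j)) / (1 - ∑' i : ℕ, a (i + 1))) := by
  set A := ∑' i : ℕ, a (i + 1)
  set S := ∑' j : ℕ, a (p + 1 + j)
  have hA0 : 0 ≤ A := tsum_nonneg fun i => ha _
  have hS0 : 0 ≤ S := tsum_nonneg fun j => ha _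
  have hinit : ∀ t ≤ -(N : ℤ), u t ≤ C := fun t ht => by
    rcases le_or_gt t (-(N' : ℤ)) with hle | hgt
    · exact (h1 t hle).le.trans hC
    · exact h2 t hgt ht
  exact le_of_le_sum_lag_add (B := cauchyEnvelope C A S p N) ha (sum_Icc_le_tsum_succ ha hsum p)
    (cauchyEnvelope.antitone hC hA0 hA.le) (cauchyEnvelope.nonneg hC hA0 hA hS0)
    (fun t ht => (hinit t ht).trans (cauchyEnvelope.const_le_of_le_neg hC hA hS0 ht)) hrec
    (fun t _ => cauchyEnvelope.mul_lag_add_le hC hA0 hA t)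

/-- The Cauchy estimate (bound (5.2)) in the proof of Theorem 5.1: under the
recursion `u_t ≤ ∑_{i=1}^p a_i u_{t-i} + C S_{p+1}` for `t > -N`, with `u_t = 0`
for `t ≤ -N'` and `u_t ≤ C` for `-N' < t ≤ -N`, one has
`u_t ≤ C (a^{max(0,t+N)/p} + S_{p+1}/(1-a))` for all `t`. -/
theorem stmt8 (u : ℤ → ℝ) (C : ℝ) (p : ℕ) (a : ℕ → ℝ) (N N' : ℕ)
    (hC : 0 ≤ C) (hp : 1 ≤ p) (ha : ∀ i, 0 ≤ a i)
    (hsum : Summable fun i : ℕ => a (i + 1))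
    (hA : (∑' i : ℕ, a (i + 1)) < 1)
    (hN : 1 ≤ N) (hNN' : N < N')
    (h1 : ∀ t : ℤ, t ≤ -(N' : ℤ) → u t = 0)
    (h2 : ∀ t : ℤ, -(N' : ℤ) < t → t ≤ -(N : ℤ) → u t ≤ C)
    (hrec : ∀ t : ℤ, -(N : ℤ) < t →
      u t ≤ (∑ i ∈ Finset.Icc 1 p, a i * u (t - (i : ℤ))) +
        C * ∑' j : ℕ, a (p + 1 + j)) :
    ∀ t : ℤ, u t ≤ C * ((∑' i : ℕ, a (i + 1)) ^ ((((t + N) ⊔ 0).toNat : ℝ) / p) +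
      (∑' j : ℕ, a (p + 1 + j)) / (1 - ∑' i : ℕ, a (i + 1))) :=
  stmt8_general u C p a N N' hC ha hsum hA h1 h2 hrec
end

section
/- Let (a_i)_{i≥1} and (b_j)_{j≥1} be summable nonnegative sequences with a := ∑ a_i < 1, and let S_{p+1} = ∑_{i≥p+1} a_i, T_s = ∑_{j≥s} b_j. Fix r ≥ 1 and define ω_t = inf_{p≥1} { a^{(t-r)/p} + S_{p+1} + ∑_{j=0}^{t-r+1} a^{j/p} T_{t-r+1-j} } for t > r (with T_0 := ∑_{j≥0} b_j, extending b to j=0 by b_0 = 0 or a fixed value). If a_i ≤ c₁ λ^i and b_j ≤ c₂ λ^j for some c₁, c₂ > 0 and λ ∈ (0,1), then there exist C > 0 and μ ∈ (0,1) such that ω_t ≤ C μ^{√(t-r)} for all t > r; in particular ∑_{t>r} ω_t < ∞. -/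
/-!
Put `ρ := max (∑ aᵢ) λ < 1`, `n := t - r` and `s := √n`. Evaluating the infimum at
`p = ⌈s⌉` makes every exponent of `ρ` that occurs at least `s - 1`: `n / p ≥ s - 1` for the
first term, `p + 1 ≥ s` for the geometric tail `S_{p+1}`, and `j / p + (n + 1 - j) ≥ (n + 1) / p`
for the summands of the convolution. Hence `ω_t ≲ (n + 2) ρ^(s - 1) = (s² + 2) ρ^(s - 1)`, and
the polynomial factor is absorbed by halving the rate: `ω_t ≲ (√ρ)^s`. Summability follows since
`s⁴ (√ρ)^s` is bounded, i.e. `(√ρ)^√m = O(1 / m²)`.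
-/

open Real Finset
open scoped Nat

/-- The expression minimised over `p` in `ω_t`, with `n = t - r`. -/
noncomputable def couplingBound (a b : ℕ → ℝ) (n p : ℕ) : ℝ :=
  (∑' i : ℕ, a (i + 1)) ^ ((n : ℝ) / p) + (∑' i : ℕ, a (p + 1 + i)) +
    ∑ j ∈ range (n + 2), (∑' i : ℕ, a (i + 1)) ^ ((j : ℝ) / p) * ∑' i : ℕ, b (n + 1 - j + i)

theorem pow_mul_rpow_le_factorial_div {μ x : ℝ} (hμ0 : 0 < μ) (hμ1 : μ < 1) (hx : 0 ≤ x)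
    (k : ℕ) : x ^ k * μ ^ x ≤ k ! / (-log μ) ^ k := by
  set δ := -log μ
  have hδ : 0 < δ := neg_pos.mpr (log_neg hμ0 hμ1)
  have hexp := pow_div_factorial_le_exp (δ * x) (by positivity) k
  rw [div_le_iff₀ (by positivity), mul_pow] at hexp
  rw [rpow_def_of_pos hμ0, show log μ * x = -(δ * x) by ring, le_div_iff₀ (by positivity)]
  calc x ^ k * exp (-(δ * x)) * δ ^ k = δ ^ k * x ^ k * exp (-(δ * x)) := by ring
    _ ≤ exp (δ * x) * k ! * exp (-(δ * x)) := by gcongr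
    _ = k ! := by rw [mul_right_comm, ← exp_add, add_neg_cancel, exp_zero, one_mul]

theorem summable_rpow_sqrt_natCast {μ : ℝ} (hμ0 : 0 < μ) (hμ1 : μ < 1) :
    Summable fun n : ℕ => μ ^ √(n : ℝ) := by
  refine (summable_nat_add_iff 1).mp ?_
  have hζ : Summable fun n : ℕ => 1 / ((n + 1 : ℕ) : ℝ) ^ 2 :=
    (summable_nat_add_iff 1).mpr (summable_one_div_nat_pow.mpr one_lt_two)
  refine .of_nonneg_of_le (fun n => (rpow_pos_of_pos hμ0 _).le) (fun n => ?_)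
    (hζ.mul_left (4 ! / (-log μ) ^ 4))
  have hn : (0 : ℝ) < ((n + 1 : ℕ) : ℝ) := by positivity
  have key := pow_mul_rpow_le_factorial_div hμ0 hμ1 (sqrt_nonneg ((n + 1 : ℕ) : ℝ)) 4
  rw [show 4 = 2 * 2 from rfl, pow_mul, sq_sqrt hn.le] at key
  rw [mul_one_div, le_div_iff₀ (by positivity), mul_comm]
  exact key

theorem sq_add_two_mul_rpow_sub_one_le {ρ s : ℝ} (hρ0 : 0 < ρ) (hρ1 : ρ < 1) (hs : 0 ≤ s) :
    (s ^ 2 + 2) * ρ ^ (s - 1) ≤ (2 / (-log √ρ) ^ 2 + 2) / ρ * √ρ ^ s := by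
  set μ := √ρ
  have hμ0 : 0 < μ := sqrt_pos.mpr hρ0
  have hμ1 : μ < 1 := by simpa using sqrt_lt_sqrt hρ0.le hρ1
  have hρ : ρ ^ (s - 1) = μ ^ s * μ ^ s / ρ := by
    rw [rpow_sub_one hρ0.ne', ← mul_rpow hμ0.le hμ0.le, mul_self_sqrt hρ0.le]
  have hsq : s ^ 2 * μ ^ s ≤ 2 / (-log μ) ^ 2 := by
    simpa using pow_mul_rpow_le_factorial_div hμ0 hμ1 hs 2
  have hle : μ ^ s ≤ 1 := rpow_le_one hμ0.le hμ1.le hs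
  rw [hρ]
  calc (s ^ 2 + 2) * (μ ^ s * μ ^ s / ρ) = (s ^ 2 * μ ^ s + 2 * μ ^ s) / ρ * μ ^ s := by ring
    _ ≤ (2 / (-log μ) ^ 2 + 2) / ρ * μ ^ s := by gcongr; linarith

theorem rpow_le_rpow_of_base_le_of_exponent_ge {y ρ e x : ℝ} (hy : 0 ≤ y) (hyρ : y ≤ ρ)
    (hρ0 : 0 < ρ) (hρ1 : ρ ≤ 1) (he : 0 ≤ e) (hxe : x ≤ e) : y ^ e ≤ ρ ^ x :=
  (rpow_le_rpow hy hyρ he).trans (rpow_le_rpow_of_exponent_ge hρ0 hρ1 hxe)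


theorem tsum_nat_add_le_rpow_of_le_geometric {f : ℕ → ℝ} {c lam ρ x : ℝ} (hf0 : ∀ i, 0 ≤ f i)
    (hl0 : 0 ≤ lam) (hl1 : lam < 1) (hf : ∀ i, f i ≤ c * lam ^ i) (hlρ : lam ≤ ρ)
    (hρ0 : 0 < ρ) (hρ1 : ρ ≤ 1) {k : ℕ} (hxk : x ≤ k) :
    ∑' i, f (k + i) ≤ c / (1 - lam) * ρ ^ x := by
  have hc : 0 ≤ c := by simpa using (hf0 0).trans (hf 0)
  have hg : Summable fun i => c * lam ^ k * lam ^ i :=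
    (summable_geometric_of_lt_one hl0 hl1).mul_left _
  have hfg : ∀ i, f (k + i) ≤ c * lam ^ k * lam ^ i := fun i => by
    simpa [pow_add, mul_assoc] using hf (k + i)
  calc ∑' i, f (k + i) ≤ ∑' i, c * lam ^ k * lam ^ i :=
        (hg.of_nonneg_of_le (fun i => hf0 _) hfg).tsum_le_tsum hfg hg
    _ = c / (1 - lam) * lam ^ (k : ℝ) := by
        rw [tsum_mul_left, tsum_geometric_of_lt_one hl0 hl1, rpow_natCast]; ring
    _ ≤ c / (1 - lam) * ρ ^ x := by
        gcongr
        exact rpow_le_rpow_of_base_le_of_exponent_ge hl0 hlρ hρ0 hρ1 (Nat.cast_nonneg k) hxk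

theorem natCast_div_le_div_add_sub {n j p : ℕ} (hp : 1 ≤ p) (hj : j ≤ n + 1) :
    (n : ℝ) / p ≤ j / p + ((n + 1 - j : ℕ) : ℝ) := by
  have hp' : (1 : ℝ) ≤ p := by exact_mod_cast hp
  have hp0 : (0 : ℝ) < p := by positivity
  have hnj : (0 : ℝ) ≤ ((n + 1 - j : ℕ) : ℝ) := Nat.cast_nonneg _
  calc (n : ℝ) / p ≤ (n + 1) / p := by gcongr; linarith
    _ = j / p + ((n + 1 - j : ℕ) : ℝ) / p := by
        rw [Nat.cast_sub hj]; push_cast; ring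
    _ ≤ j / p + ((n + 1 - j : ℕ) : ℝ) := by gcongr; exact div_le_self hnj hp'

section couplingBound

variable {a b : ℕ → ℝ} {c₁ c₂ lam ρ x : ℝ} {n p : ℕ}

theorem couplingBound_nonneg (ha0 : ∀ i, 0 ≤ a i) (hb0 : ∀ j, 0 ≤ b j) :
    0 ≤ couplingBound a b n p := by
  have hA0 : 0 ≤ ∑' i, a (i + 1) := tsum_nonneg fun i => ha0 _
  exact add_nonneg (add_nonneg (rpow_nonneg hA0 _) (tsum_nonneg fun i => ha0 _))
    (sum_nonneg fun j _ => mul_nonneg (rpow_nonneg hA0 _) (tsum_nonneg fun i => hb0 _))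

theorem couplingBound_le (ha0 : ∀ i, 0 ≤ a i) (hb0 : ∀ j, 0 ≤ b j) (hl0 : 0 ≤ lam)
    (hl1 : lam < 1) (hageo : ∀ i, a i ≤ c₁ * lam ^ i) (hbgeo : ∀ j, b j ≤ c₂ * lam ^ j)
    (hAρ : ∑' i, a (i + 1) ≤ ρ) (hlρ : lam ≤ ρ) (hρ0 : 0 < ρ) (hρ1 : ρ ≤ 1) (hp : 1 ≤ p)
    (hxn : x * p ≤ n) (hxp : x ≤ p + 1) :
    couplingBound a b n p ≤ (1 + c₁ / (1 - lam) + (n + 2) * (c₂ / (1 - lam))) * ρ ^ x := by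
  set A := ∑' i, a (i + 1)
  have hA0 : 0 ≤ A := tsum_nonneg fun i => ha0 _
  have hc₂ : 0 ≤ c₂ / (1 - lam) := div_nonneg (by simpa using (hb0 0).trans (hbgeo 0))
    (by linarith)
  have hxn' : x ≤ n / p := (le_div_iff₀ (by exact_mod_cast hp)).mpr hxn
  have hfirst : A ^ ((n : ℝ) / p) ≤ ρ ^ x :=
    rpow_le_rpow_of_base_le_of_exponent_ge hA0 hAρ hρ0 hρ1 (by positivity) hxn'
  have hsecond : ∑' i, a (p + 1 + i) ≤ c₁ / (1 - lam) * ρ ^ x :=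
    tsum_nat_add_le_rpow_of_le_geometric ha0 hl0 hl1 hageo hlρ hρ0 hρ1 (by push_cast; linarith)
  have hthird : ∀ j ∈ range (n + 2),
      A ^ ((j : ℝ) / p) * ∑' i, b (n + 1 - j + i) ≤ c₂ / (1 - lam) * ρ ^ x := by
    intro j hj
    have hjn : j ≤ n + 1 := Nat.lt_succ_iff.mp (mem_range.mp hj)
    calc A ^ ((j : ℝ) / p) * ∑' i, b (n + 1 - j + i)
        ≤ ρ ^ ((j : ℝ) / p) * (c₂ / (1 - lam) * ρ ^ ((n + 1 - j : ℕ) : ℝ)) :=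
          mul_le_mul (rpow_le_rpow hA0 hAρ (by positivity))
            (tsum_nat_add_le_rpow_of_le_geometric hb0 hl0 hl1 hbgeo hlρ hρ0 hρ1 le_rfl)
            (tsum_nonneg fun i => hb0 _) (rpow_nonneg hρ0.le _)
      _ = c₂ / (1 - lam) * ρ ^ ((j : ℝ) / p + ((n + 1 - j : ℕ) : ℝ)) := by
          rw [rpow_add hρ0]; ring
      _ ≤ c₂ / (1 - lam) * ρ ^ x :=
          mul_le_mul_of_nonneg_left (rpow_le_rpow_of_exponent_ge hρ0 hρ1
            (hxn'.trans (natCast_div_le_div_add_sub hp hjn))) hc₂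
  calc couplingBound a b n p
      ≤ ρ ^ x + c₁ / (1 - lam) * ρ ^ x + ∑ j ∈ range (n + 2), c₂ / (1 - lam) * ρ ^ x :=
        add_le_add (add_le_add hfirst hsecond) (sum_le_sum hthird)
    _ = (1 + c₁ / (1 - lam) + (n + 2) * (c₂ / (1 - lam))) * ρ ^ x := by
        rw [sum_const, card_range, nsmul_eq_mul]; push_cast; ring

theorem iInf_couplingBound_le (ha0 : ∀ i, 0 ≤ a i) (hb0 : ∀ j, 0 ≤ b j) (hl0 : 0 ≤ lam)
    (hl1 : lam < 1) (hageo : ∀ i, a i ≤ c₁ * lam ^ i) (hbgeo : ∀ j, b j ≤ c₂ * lam ^ j)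
    (hAρ : ∑' i, a (i + 1) ≤ ρ) (hlρ : lam ≤ ρ) (hρ0 : 0 < ρ) (hρ1 : ρ ≤ 1) (hn : 1 ≤ n) :
    ⨅ p : {p : ℕ // 1 ≤ p}, couplingBound a b n p ≤
      (1 + c₁ / (1 - lam) + (n + 2) * (c₂ / (1 - lam))) * ρ ^ (√n - 1) := by
  set s := √(n : ℝ)
  have hs1 : 1 ≤ s := one_le_sqrt.mpr (by exact_mod_cast hn)
  have hsq : s ^ 2 = n := sq_sqrt (Nat.cast_nonneg n)
  have hsp : s ≤ ⌈s⌉₊ := Nat.le_ceil s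
  have hps : (⌈s⌉₊ : ℝ) < s + 1 := Nat.ceil_lt_add_one (by linarith)
  refine (ciInf_le ⟨0, Set.forall_mem_range.mpr fun _ => couplingBound_nonneg ha0 hb0⟩
    ⟨⌈s⌉₊, Nat.one_le_ceil_iff.mpr (by linarith)⟩).trans ?_
  refine couplingBound_le ha0 hb0 hl0 hl1 hageo hbgeo hAρ hlρ hρ0 hρ1
    (Nat.one_le_ceil_iff.mpr (by linarith)) ?_ (by linarith)
  -- `(s - 1) ⌈s⌉ ≤ (s - 1) (s + 1) = n - 1`
  nlinarith

theorem exists_pos_iInf_couplingBound_le (ha0 : ∀ i, 0 ≤ a i) (hb0 : ∀ j, 0 ≤ b j)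
    (hl0 : 0 ≤ lam) (hl1 : lam < 1) (hageo : ∀ i, a i ≤ c₁ * lam ^ i)
    (hbgeo : ∀ j, b j ≤ c₂ * lam ^ j) (hAρ : ∑' i, a (i + 1) ≤ ρ) (hlρ : lam ≤ ρ) (hρ0 : 0 < ρ)
    (hρ1 : ρ < 1) :
    ∃ C > 0, ∀ n : ℕ, 1 ≤ n →
      ⨅ p : {p : ℕ // 1 ≤ p}, couplingBound a b n p ≤ C * √ρ ^ √(n : ℝ) := by
  have hl1' : 0 < 1 - lam := by linarith
  have hc₁ : 0 ≤ c₁ / (1 - lam) := div_nonneg (by simpa using (ha0 0).trans (hageo 0)) hl1'.le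
  have hc₂ : 0 ≤ c₂ / (1 - lam) := div_nonneg (by simpa using (hb0 0).trans (hbgeo 0)) hl1'.le
  set K := 1 + c₁ / (1 - lam) + c₂ / (1 - lam) with hK
  have hK0 : 0 < K := by linarith
  refine ⟨K * ((2 / (-log √ρ) ^ 2 + 2) / ρ), by positivity, fun n hn => ?_⟩
  have hsq : √(n : ℝ) ^ 2 = n := sq_sqrt (Nat.cast_nonneg _)
  calc ⨅ p : {p : ℕ // 1 ≤ p}, couplingBound a b n p
      ≤ (1 + c₁ / (1 - lam) + (n + 2) * (c₂ / (1 - lam))) * ρ ^ (√n - 1) :=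
        iInf_couplingBound_le ha0 hb0 hl0 hl1 hageo hbgeo hAρ hlρ hρ0 hρ1.le hn
    _ ≤ K * ((√n ^ 2 + 2) * ρ ^ (√n - 1)) := by
        rw [hsq, ← mul_assoc]
        gcongr
        nlinarith [(Nat.cast_nonneg n : (0 : ℝ) ≤ n)]
    _ ≤ K * ((2 / (-log √ρ) ^ 2 + 2) / ρ * √ρ ^ √(n : ℝ)) :=
        mul_le_mul_of_nonneg_left (sq_add_two_mul_rpow_sub_one_le hρ0 hρ1 (sqrt_nonneg _)) hK0.le
    _ = K * ((2 / (-log √ρ) ^ 2 + 2) / ρ) * √ρ ^ √(n : ℝ) := (mul_assoc _ _ _).symm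

end couplingBound

theorem stmt18_general (a b : ℕ → ℝ) (r : ℕ) (c₁ c₂ lam : ℝ)
    (ha0 : ∀ i, 0 ≤ a i) (hb0 : ∀ j, 0 ≤ b j)
    (hlam : lam ∈ Set.Ioo (0 : ℝ) 1)
    (hageo : ∀ i, a i ≤ c₁ * lam ^ i) (hbgeo : ∀ j, b j ≤ c₂ * lam ^ j)
    (hA : (∑' i : ℕ, a (i + 1)) < 1)
    (ω : ℕ → ℝ)
    (hω : ∀ t, r < t → ω t = ⨅ p : {p : ℕ // 1 ≤ p},
      ((∑' i : ℕ, a (i + 1)) ^ (((t - r : ℕ) : ℝ) / (p : ℕ)) +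
        (∑' i : ℕ, a ((p : ℕ) + 1 + i)) +
        ∑ j ∈ Finset.range (t - r + 2),
          (∑' i : ℕ, a (i + 1)) ^ ((j : ℝ) / (p : ℕ)) *
            ∑' i : ℕ, b (t - r + 1 - j + i))) :
    ∃ C : ℝ, 0 < C ∧ ∃ μ ∈ Set.Ioo (0 : ℝ) 1,
      (∀ t, r < t → ω t ≤ C * μ ^ Real.sqrt ((t - r : ℕ) : ℝ)) ∧
      Summable (fun s : ℕ => ω (r + 1 + s)) := by
  obtain ⟨hl0, hl1⟩ := hlam
  set ρ := max (∑' i : ℕ, a (i + 1)) lam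
  have hρ0 : 0 < ρ := hl0.trans_le (le_max_right _ _)
  have hρ1 : ρ < 1 := max_lt hA hl1
  have hμ0 : 0 < √ρ := sqrt_pos.mpr hρ0
  have hμ1 : √ρ < 1 := by simpa using sqrt_lt_sqrt hρ0.le hρ1
  obtain ⟨C, hC, hC_le⟩ := exists_pos_iInf_couplingBound_le ha0 hb0 hl0.le hl1 hageo hbgeo
    (le_max_left _ _) (le_max_right _ _) hρ0 hρ1
  have hbound : ∀ t, r < t → ω t ≤ C * √ρ ^ √((t - r : ℕ) : ℝ) := fun t ht =>
    (hω t ht).trans_le (hC_le (t - r) (by omega))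
  refine ⟨C, hC, √ρ, ⟨hμ0, hμ1⟩, hbound, ?_⟩
  refine .of_nonneg_of_le (fun s => ?_) (fun s => ?_)
    (((summable_nat_add_iff 1).mpr (summable_rpow_sqrt_natCast hμ0 hμ1)).mul_left C)
  · rw [hω _ (by omega)]
    exact iInf_nonneg fun p => couplingBound_nonneg ha0 hb0
  · have := hbound (r + 1 + s) (by omega)
    rwa [show r + 1 + s - r = s + 1 by omega] at this

/-- Stretched-exponential decay of the coupling bound `ω_{n,t,r}` of Theorem 5.2 /
Corollary 5.4 in the geometric-coefficients case: if `a_i ≤ c₁ λ^i`,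
`b_j ≤ c₂ λ^j` and `a := ∑_{i≥1} a_i < 1`, then
`ω_t = inf_{p≥1} { a^{(t-r)/p} + S_{p+1} + ∑_{j=0}^{t-r+1} a^{j/p} T_{t-r+1-j} }`
satisfies `ω_t ≤ C μ^{√(t-r)}` for some `C > 0`, `μ ∈ (0,1)`; in particular
`∑_{t>r} ω_t < ∞`. -/
theorem stmt18 (a b : ℕ → ℝ) (r : ℕ) (c₁ c₂ lam : ℝ)
    (ha0 : ∀ i, 0 ≤ a i) (hb0 : ∀ j, 0 ≤ b j)
    (hc₁ : 0 < c₁) (hc₂ : 0 < c₂) (hlam : lam ∈ Set.Ioo (0 : ℝ) 1)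
    (hageo : ∀ i, a i ≤ c₁ * lam ^ i) (hbgeo : ∀ j, b j ≤ c₂ * lam ^ j)
    (hA : (∑' i : ℕ, a (i + 1)) < 1) (hr : 1 ≤ r)
    (ω : ℕ → ℝ)
    (hω : ∀ t, r < t → ω t = ⨅ p : {p : ℕ // 1 ≤ p},
      ((∑' i : ℕ, a (i + 1)) ^ (((t - r : ℕ) : ℝ) / (p : ℕ)) +
        (∑' i : ℕ, a ((p : ℕ) + 1 + i)) +
        ∑ j ∈ Finset.range (t - r + 2),
          (∑' i : ℕ, a (i + 1)) ^ ((j : ℝ) / (p : ℕ)) *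
            ∑' i : ℕ, b (t - r + 1 - j + i))) :
    ∃ C : ℝ, 0 < C ∧ ∃ μ ∈ Set.Ioo (0 : ℝ) 1,
      (∀ t, r < t → ω t ≤ C * μ ^ Real.sqrt ((t - r : ℕ) : ℝ)) ∧
      Summable (fun s : ℕ => ω (r + 1 + s)) :=
  stmt18_general a b r c₁ c₂ lam ha0 hb0 hlam hageo hbgeo hA ω hω
end

section
/- Let X, Y, X', Y' be random variables on a probability space with values in measurable spaces, and suppose P(Y_t ≠ Y'_t) is summable over t ≥ n. Let V_t = (Y_t, W_t) and V'_t = (Y'_t, W_t) for some common process (W_t). Then for σ-algebras F = σ(V_t : t ≤ 0) and G = σ(V_t : t ≥ n), G' = σ(V'_t : t ≥ n), the strong mixing coefficient satisfies α(F, G) ≤ α(F, G') + 2 ∑_{t≥n} P(Y_t ≠ Y'_t), where α(F, G) = sup{ |P(A∩B) - P(A)P(B)| : A ∈ F, B ∈ G }. -/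
open MeasureTheory

/-- The strong mixing coefficient `α(F, G)` between two σ-algebras. -/
noncomputable def alphaMix {Ω : Type*} [MeasurableSpace Ω] (P : Measure Ω)
    (F G : MeasurableSpace Ω) : ℝ :=
  sSup {x : ℝ | ∃ A B : Set Ω, MeasurableSet[F] A ∧ MeasurableSet[G] B ∧
    x = |(P (A ∩ B)).toReal - (P A).toReal * (P B).toReal|}

/-!
Off the set `N = ⋃_{t ≥ n} {Y_t ≠ Y'_t}` the generators `V_t` and `V'_t` (`t ≥ n`) coincide, so
`σ(V_t : t ≥ n)` and `σ(V'_t : t ≥ n)` have the same trace on `Nᶜ`: every `B` in the first agrees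
off `N` with some `B'` in the second. Replacing `B` by `B'` moves both `P(A ∩ B)` and `P(A) P(B)`
by at most `P(N) ≤ ∑_{t ≥ n} P(Y_t ≠ Y'_t)`. The σ-algebras involved need not lie inside the
ambient one, so `P` acts on their sets as an outer measure: only monotonicity and subadditivity
enter.
-/

open Set

theorem MeasurableSpace.exists_measurableSet_sdiff_eq_of_eqOn_compl {ι Ω : Type*}
    {β : ι → Type*} [∀ i, MeasurableSpace (β i)] {f g : ∀ i, Ω → β i} {N : Set Ω}
    (hfg : ∀ i, EqOn (f i) (g i) Nᶜ) {B : Set Ω}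
    (hB : MeasurableSet[⨆ i, MeasurableSpace.comap (f i) inferInstance] B) :
    ∃ B', MeasurableSet[⨆ i, MeasurableSpace.comap (g i) inferInstance] B' ∧
      B \ N = B' \ N := by
  have hcomap :
      (⨆ i, MeasurableSpace.comap (f i) inferInstance).comap ((↑) : ↥(Nᶜ : Set Ω) → Ω) =
        (⨆ i, MeasurableSpace.comap (g i) inferInstance).comap ((↑) : ↥(Nᶜ : Set Ω) → Ω) := by
    simp only [MeasurableSpace.comap_iSup, MeasurableSpace.comap_comp]
    refine iSup_congr fun i => congrArg (fun h => MeasurableSpace.comap h inferInstance) ?_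
    exact funext fun ω => hfg i ω.2
  obtain ⟨B', hB', hpre⟩ : MeasurableSet[(⨆ i, MeasurableSpace.comap (g i) inferInstance).comap
      ((↑) : ↥(Nᶜ : Set Ω) → Ω)] ((↑) ⁻¹' B) := hcomap ▸ ⟨B, hB, rfl⟩
  refine ⟨B', hB', ?_⟩
  rw [Subtype.preimage_coe_eq_preimage_coe_iff] at hpre
  rw [Set.sdiff_eq, Set.sdiff_eq, inter_comm, ← hpre, inter_comm]

section

variable {Ω : Type*} {mΩ : MeasurableSpace Ω} {P : Measure[mΩ] Ω}

namespace MeasureTheory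

theorem measureReal_iUnion_le_tsum [IsFiniteMeasure P] {s : ℕ → Set Ω}
    (hs : Summable fun i => P.real (s i)) : P.real (⋃ i, s i) ≤ ∑' i, P.real (s i) := by
  refine ENNReal.toReal_le_of_le_ofReal (tsum_nonneg fun _ => measureReal_nonneg) ?_
  rw [ENNReal.ofReal_tsum_of_nonneg (fun _ => measureReal_nonneg) hs]
  exact (measure_iUnion_le s).trans_eq (tsum_congr fun _ => (ofReal_measureReal).symm)

theorem abs_measureReal_sub_le_of_sdiff_eq [IsFiniteMeasure P] {B B' N : Set Ω}
    (h : B \ N = B' \ N) : |P.real B - P.real B'| ≤ P.real N := by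
  have le_of_eq : ∀ {U V : Set Ω}, U \ N = V \ N → P.real U ≤ P.real V + P.real N :=
    fun hUV => (measureReal_mono (sdiff_subset_iff.1 (hUV ▸ sdiff_subset))).trans
      ((measureReal_union_le _ _).trans_eq (add_comm _ _))
  rw [abs_sub_le_iff]
  constructor <;> linarith [le_of_eq h, le_of_eq h.symm]

theorem abs_measureReal_inter_sub_mul_le_one [IsZeroOrProbabilityMeasure P] (A B : Set Ω) :
    |P.real (A ∩ B) - P.real A * P.real B| ≤ 1 :=
  abs_sub_le_of_nonneg_of_le measureReal_nonneg measureReal_le_one (by positivity)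
    (mul_le_one₀ measureReal_le_one measureReal_nonneg measureReal_le_one)

theorem abs_measureReal_inter_sub_mul_le_of_sdiff_eq [IsZeroOrProbabilityMeasure P] (A : Set Ω)
    {B B' N : Set Ω} (h : B \ N = B' \ N) :
    |P.real (A ∩ B) - P.real A * P.real B| ≤
      |P.real (A ∩ B') - P.real A * P.real B'| + 2 * P.real N := by
  have hinter : |P.real (A ∩ B) - P.real (A ∩ B')| ≤ P.real N :=
    abs_measureReal_sub_le_of_sdiff_eq (by rw [inter_sdiff_assoc, inter_sdiff_assoc, h])
  have hprod : |P.real A * P.real B - P.real A * P.real B'| ≤ P.real N := by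
    rw [← mul_sub, abs_mul, abs_of_nonneg measureReal_nonneg]
    exact (mul_le_of_le_one_left (abs_nonneg _) measureReal_le_one).trans
      (abs_measureReal_sub_le_of_sdiff_eq h)
  have hsplit := abs_sub_le (P.real (A ∩ B)) (P.real (A ∩ B')) (P.real A * P.real B)
  have hsplit' := abs_sub_le (P.real (A ∩ B')) (P.real A * P.real B') (P.real A * P.real B)
  rw [abs_sub_comm (P.real A * P.real B')] at hsplit'
  linarith

end MeasureTheory

theorem alphaMix_nonneg (F G : MeasurableSpace Ω) : 0 ≤ @alphaMix Ω mΩ P F G :=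
  Real.sSup_nonneg (by rintro _ ⟨_, _, _, _, rfl⟩; exact abs_nonneg _)

theorem le_alphaMix [IsZeroOrProbabilityMeasure P] {F G : MeasurableSpace Ω} {A B : Set Ω}
    (hA : MeasurableSet[F] A) (hB : MeasurableSet[G] B) :
    |P.real (A ∩ B) - P.real A * P.real B| ≤ @alphaMix Ω mΩ P F G :=
  le_csSup ⟨1, by rintro _ ⟨A, B, -, -, rfl⟩; exact abs_measureReal_inter_sub_mul_le_one A B⟩
    ⟨A, B, hA, hB, rfl⟩

theorem alphaMix_le_add_of_forall_sdiff_eq [IsZeroOrProbabilityMeasure P]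
    {F G G' : MeasurableSpace Ω} (N : Set Ω)
    (h : ∀ B, MeasurableSet[G] B → ∃ B', MeasurableSet[G'] B' ∧ B \ N = B' \ N) :
    @alphaMix Ω mΩ P F G ≤ @alphaMix Ω mΩ P F G' + 2 * P.real N := by
  refine Real.sSup_le ?_ (add_nonneg (alphaMix_nonneg F G') (by positivity))
  rintro _ ⟨A, B, hA, hB, rfl⟩
  obtain ⟨B', hB', hBB'⟩ := h B hB
  grw [← le_alphaMix hA hB']
  exact abs_measureReal_inter_sub_mul_le_of_sdiff_eq A hBB'

end

/-- Inequality (1.4) of the paper: the basic coupling bound for strong mixing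
coefficients.  With `V_t = (Y_t, W_t)` and `V'_t = (Y'_t, W_t)`,
`α(σ(V_t : t ≤ 0), σ(V_t : t ≥ n)) ≤ α(σ(V_t : t ≤ 0), σ(V'_t : t ≥ n))
  + 2 ∑_{t ≥ n} P(Y_t ≠ Y'_t)`. -/
theorem stmt19 {Ω γ δ : Type*} [MeasurableSpace Ω] [MeasurableSpace γ] [MeasurableSpace δ]
    (P : Measure Ω) [IsProbabilityMeasure P]
    (Y Y' : ℤ → Ω → γ) (W : ℤ → Ω → δ) (n : ℤ)
    (hsum : Summable fun t : ℕ => (P {ω | Y (n + t) ω ≠ Y' (n + t) ω}).toReal) :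
    alphaMix P
        (⨆ t : {t : ℤ // t ≤ 0},
          MeasurableSpace.comap (fun ω => (Y (t : ℤ) ω, W (t : ℤ) ω)) inferInstance)
        (⨆ t : {t : ℤ // n ≤ t},
          MeasurableSpace.comap (fun ω => (Y (t : ℤ) ω, W (t : ℤ) ω)) inferInstance) ≤
      alphaMix P
        (⨆ t : {t : ℤ // t ≤ 0},
          MeasurableSpace.comap (fun ω => (Y (t : ℤ) ω, W (t : ℤ) ω)) inferInstance)
        (⨆ t : {t : ℤ // n ≤ t},
          MeasurableSpace.comap (fun ω => (Y' (t : ℤ) ω, W (t : ℤ) ω)) inferInstance) +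
      2 * ∑' t : ℕ, (P {ω | Y (n + t) ω ≠ Y' (n + t) ω}).toReal := by
  set N := ⋃ k : ℕ, {ω | Y (n + k) ω ≠ Y' (n + k) ω}
  have hagree : ∀ t : {t : ℤ // n ≤ t},
      EqOn (fun ω => (Y t ω, W t ω)) (fun ω => (Y' t ω, W t ω)) Nᶜ := by
    rintro ⟨t, ht⟩ ω hω
    obtain ⟨k, rfl⟩ := Int.le.dest ht
    by_contra hne
    exact hω (mem_iUnion.2 ⟨k, fun h => hne (by simp only [h])⟩)
  calc _ ≤ _ + 2 * P.real N := alphaMix_le_add_of_forall_sdiff_eq N fun _ hB =>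
        MeasurableSpace.exists_measurableSet_sdiff_eq_of_eqOn_compl hagree hB
    _ ≤ _ := by grw [measureReal_iUnion_le_tsum hsum]; rfl
end
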